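/- Let p be a prime and n ≥ 1. There exists a ∈ W(ℤ_p) whose ghost components are w_j(a) = p^{p^{j+1}·n − 1} for all j ≥ 0, and any a ∈ W(ℤ_p) with these ghost components is sent to 0 by the ring homomorphism W(ℤ_p) → W(ℤ/p^n) induced by the projection ℤ_p → ℤ/p^n. -/

import Mathlib

/-! If the Witt coordinates `a_i`, `i < j`, are divisible by `p ^ n`, every term
`p ^ i * a_i ^ p ^ (j - i)` of `w_j(a)` but the last is divisible by `p ^ (n + j)`, because
`i + n * p ^ (j - i) ≥ n + j`. So when `p` is a nonzerodivisor, `p ^ (n + j) ∣ w_j(a)` for all `j`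
forces `p ^ n ∣ a_j` for all `j`; and `p ^ (n + j)` divides `p ^ (p ^ (j + 1) * n - 1)`.
In `W(ℤ_p)` this puts the coordinates in `p ^ n ℤ_p`, the kernel of `ℤ_p → ℤ/p^n`; in `W(Frac ℤ_p)`,
where the ghost map is bijective, it shows that the preimage of the ghost vector is integral. -/

open WittVector Finset

theorem Nat.add_le_mul_pow {n p : ℕ} (hn : 1 ≤ n) (hp : 2 ≤ p) (k : ℕ) : n + k ≤ n * p ^ k := by
  have := Nat.lt_pow_self (n := k) hp
  nlinarith

theorem pow_dvd_sum_pow_mul_pow_pow {R : Type*} [CommRing R] {p n : ℕ} (hp : 2 ≤ p) (hn : 1 ≤ n)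
    (c : ℕ → R) (j : ℕ) (hc : ∀ i < j, (p : R) ^ n ∣ c i) :
    (p : R) ^ (n + j) ∣ ∑ i ∈ range j, (p : R) ^ i * c i ^ p ^ (j - i) := by
  refine dvd_sum fun i hi => ?_
  have hij := mem_range.mp hi
  have hexp : n + j ≤ i + n * p ^ (j - i) := by
    have := Nat.add_le_mul_pow hn hp (j - i)
    omega
  calc (p : R) ^ (n + j) ∣ (p : R) ^ (i + n * p ^ (j - i)) := pow_dvd_pow _ hexp
    _ = (p : R) ^ i * ((p : R) ^ n) ^ p ^ (j - i) := by rw [pow_add, pow_mul]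
    _ ∣ (p : R) ^ i * c i ^ p ^ (j - i) := mul_dvd_mul_left _ (pow_dvd_pow_of_dvd (hc i hij) _)

namespace WittVector

variable {p : ℕ} [hp : Fact p.Prime] {R : Type*} [CommRing R]

theorem ghostComponent_eq_sum (x : WittVector p R) (j : ℕ) :
    ghostComponent j x = ∑ i ∈ range (j + 1), (p : R) ^ i * x.coeff i ^ p ^ (j - i) :=
  aeval_wittPolynomial p ℤ x.coeff j

theorem ghostComponent_map {S : Type*} [CommRing S] (f : R →+* S) (x : WittVector p R) (j : ℕ) :
    ghostComponent j (map f x) = f (ghostComponent j x) := by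
  simp only [ghostComponent_eq_sum, map_coeff, map_sum, map_mul, map_pow, map_natCast]

theorem exists_coeff_eq_of_ghostComponent_eq {K : Type*} [CommRing K] [IsDomain K]
    (ι : R →+* K) (hpK : (p : K) ≠ 0) {n : ℕ} (hn : 1 ≤ n) (b : WittVector p K)
    (hb : ∀ j, ∃ e, ghostComponent j b = ι ((p : R) ^ (n + j) * e)) (j : ℕ) :
    ∃ c, b.coeff j = ι ((p : R) ^ n * c) := by
  induction j using Nat.strong_induction_on with
  | _ j ih =>
  choose! c hc using ih
  obtain ⟨e, he⟩ := hb j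
  obtain ⟨d, hd⟩ := pow_dvd_sum_pow_mul_pow_pow hp.out.two_le hn (fun i => (p : R) ^ n * c i) j
    fun i _ => dvd_mul_right _ _
  have hlower : ∑ i ∈ range j, (p : K) ^ i * b.coeff i ^ p ^ (j - i)
      = ι (∑ i ∈ range j, (p : R) ^ i * ((p : R) ^ n * c i) ^ p ^ (j - i)) := by
    simp only [map_sum, map_mul, map_pow, map_natCast]
    exact sum_congr rfl fun i hi => by rw [hc i (mem_range.mp hi), map_mul, map_pow, map_natCast]
  rw [ghostComponent_eq_sum, sum_range_succ, hlower, hd, Nat.sub_self, pow_zero, pow_one] at he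
  refine ⟨e - d, mul_left_cancel₀ (pow_ne_zero j hpK) ?_⟩
  simp only [map_mul, map_pow, map_natCast, map_sub] at he ⊢
  linear_combination he

theorem exists_ghostComponent_eq_of_pow_dvd [IsDomain R] (hpR : (p : R) ≠ 0) {n : ℕ} (hn : 1 ≤ n)
    (x : ℕ → R) (hx : ∀ j, (p : R) ^ (n + j) ∣ x j) :
    ∃ a : WittVector p R, ∀ j, ghostComponent j a = x j := by
  let K := FractionRing R
  have hpK : (p : K) ≠ 0 := by
    rw [← map_natCast (algebraMap R K)]
    exact (map_ne_zero_iff _ (IsFractionRing.injective R K)).mpr hpR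
  let _ : Invertible (p : K) := invertibleOfNonzero hpK
  let b := (ghostEquiv p K).symm fun j => algebraMap R K (x j)
  have hb : ∀ j, ghostComponent j b = algebraMap R K (x j) := fun j =>
    congr_fun ((ghostEquiv p K).apply_symm_apply _) j
  choose c hc using exists_coeff_eq_of_ghostComponent_eq (algebraMap R K) hpK hn b fun j => by
    obtain ⟨e, he⟩ := hx j
    exact ⟨e, by rw [hb, he]⟩
  refine ⟨mk p fun j => (p : R) ^ n * c j, fun j => IsFractionRing.injective R K ?_⟩
  have hmap : map (algebraMap R K) (mk p fun j => (p : R) ^ n * c j) = b := by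
    ext i
    rw [map_coeff, coeff_mk, hc]
  rw [← ghostComponent_map, hmap, hb]

end WittVector

/-- Let `p` be a prime and `n ≥ 1`. There exists `a ∈ W(ℤ_p)` whose ghost components are
`w_j(a) = p^(p^(j+1)·n − 1)` for all `j ≥ 0`, and any `a ∈ W(ℤ_p)` with these ghost
components is sent to `0` by the map `W(ℤ_p) → W(ℤ/p^n)` induced by the projection
`ℤ_p → ℤ/p^n`. -/
theorem stmt5 (p : ℕ) [Fact p.Prime] (n : ℕ) (hn : 1 ≤ n) :
    (∃ a : WittVector p ℤ_[p],
      ∀ j : ℕ, ghostComponent j a = (p : ℤ_[p]) ^ (p ^ (j + 1) * n - 1)) ∧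
    (∀ a : WittVector p ℤ_[p],
      (∀ j : ℕ, ghostComponent j a = (p : ℤ_[p]) ^ (p ^ (j + 1) * n - 1)) →
      WittVector.map (PadicInt.toZModPow n) a = 0) := by
  have hp0 : (p : ℤ_[p]) ≠ 0 := Nat.cast_ne_zero.mpr (Fact.out : p.Prime).ne_zero
  have hdvd (j : ℕ) : (p : ℤ_[p]) ^ (n + j) ∣ (p : ℤ_[p]) ^ (p ^ (j + 1) * n - 1) := by
    have := Nat.add_le_mul_pow hn (Fact.out : p.Prime).two_le (j + 1)
    exact pow_dvd_pow _ (by rw [mul_comm]; omega)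
  refine ⟨exists_ghostComponent_eq_of_pow_dvd hp0 hn _ hdvd, fun a ha => ?_⟩
  ext j
  obtain ⟨c, hc⟩ := exists_coeff_eq_of_ghostComponent_eq (RingHom.id _) hp0 hn a
    (fun j => by rw [ha]; exact hdvd j) j
  rw [map_coeff, zero_coeff, hc, RingHom.id_apply, ← RingHom.mem_ker, PadicInt.ker_toZModPow]
  exact Ideal.mul_mem_right _ _ (Ideal.mem_span_singleton_self _)
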